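/- Let X, Y be discrete random variables and T a deterministic function of X with induced partition 𝒮. For a cluster S = {x_1^S,...,x_{m_S}^S} and index i, let P_i^S be the mixture of the distributions P_{Y|x_j^S} for j ≠ i with weights proportional to P(x_j^S), and let β_i^S = (Σ_{j≠i} P(x_j^S)) / (Σ_j P(x_j^S)). If I(X,Y) − I(T(X),Y) ≤ ε, then Σ_{S∈𝒮} Σ_{i=1}^{m_S} (P(x_i^S)(β_i^S)²/2) · D_1(P_{Y|x_i^S}, P_i^S)² ≤ ε. -/

import Mathlib

open Finset

noncomputable section

/-- Marginal of X under joint P. -/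
def margX {α β : Type*} [Fintype β] (P : α → β → ℝ) (x : α) : ℝ := ∑ y, P x y

/-- Marginal of Y under joint P. -/
def margY {α β : Type*} [Fintype α] (P : α → β → ℝ) (y : β) : ℝ := ∑ x, P x y

/-- Conditional probability P(y|x). -/
def condYX {α β : Type*} [Fintype β] (P : α → β → ℝ) (y : β) (x : α) : ℝ := P x y / margX P x

/-- Conditional probability P(x|y). -/
def condXY {α β : Type*} [Fintype α] (P : α → β → ℝ) (x : α) (y : β) : ℝ := P x y / margY P y

/-- Mutual information of a discrete joint distribution (natural log). -/
def MI {α β : Type*} [Fintype α] [Fintype β] (P : α → β → ℝ) : ℝ :=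
  ∑ x, ∑ y, P x y * Real.log (P x y / (margX P x * margY P y))

/-- Joint distribution of (T(X), Y). -/
def jointT {α β τ : Type*} [Fintype α] [DecidableEq τ] (P : α → β → ℝ) (T : α → τ)
    (t : τ) (y : β) : ℝ :=
  ∑ x ∈ Finset.univ.filter (fun x => T x = t), P x y

/-- Conditional distribution of Y given the cluster T(X) = t. -/
def condYT {α β τ : Type*} [Fintype α] [Fintype β] [DecidableEq τ] (P : α → β → ℝ)
    (T : α → τ) (t : τ) (y : β) : ℝ :=
  jointT P T t y / (∑ x ∈ Finset.univ.filter (fun x => T x = t), margX P x)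

/-- Kullback–Leibler divergence (natural log). -/
def KL {β : Type*} [Fintype β] (p q : β → ℝ) : ℝ := ∑ y, p y * Real.log (p y / q y)

/-- L1 distance between distributions. -/
def D1 {β : Type*} [Fintype β] (p q : β → ℝ) : ℝ := ∑ y, |p y - q y|
/-- Mixture of the conditional distributions of the other members of x's
cluster (weights proportional to their marginals). -/
def Pother {α β τ : Type*} [Fintype α] [Fintype β] [DecidableEq α] [DecidableEq τ]
    (P : α → β → ℝ) (T : α → τ) (x : α) (y : β) : ℝ :=
  (∑ x' ∈ (Finset.univ.filter fun x' => T x' = T x) \ {x}, P x' y) /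
    ∑ x' ∈ (Finset.univ.filter fun x' => T x' = T x) \ {x}, margX P x'

/-- The weight β_i of the rest of the cluster. -/
def betaX {α β τ : Type*} [Fintype α] [Fintype β] [DecidableEq α] [DecidableEq τ]
    (P : α → β → ℝ) (T : α → τ) (x : α) : ℝ :=
  (∑ x' ∈ (Finset.univ.filter fun x' => T x' = T x) \ {x}, margX P x') /
    ∑ x' ∈ Finset.univ.filter fun x' => T x' = T x, margX P x'

/-!
Let `q_x` be the law of `Y` given the cluster `T x`. Grouping the terms of `I(X;Y)` and
`I(T(X);Y)` by cluster shows that the information loss equals `∑ₓ P(x) KL(P_{Y|x} ‖ q_x)`.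
Inside a cluster `q_x = (1 - β_x) P_{Y|x} + β_x P_x`, with `P_x` the mixture of the other
members, so `D₁(P_{Y|x}, q_x) = β_x D₁(P_{Y|x}, P_x)`; Pinsker's inequality
`D₁² / 2 ≤ KL` then bounds each term. Pinsker itself is reduced, by the log-sum inequality on
`{p ≥ q}` and its complement, to two-point distributions, where it is a one-variable
calculus fact.
-/

open Real

theorem sum_mul_log_div_sum_le_sum_mul_log_div {ι : Type*} (s : Finset ι) (a b : ι → ℝ)
    (ha : ∀ i ∈ s, 0 ≤ a i) (hb : ∀ i ∈ s, 0 < b i) :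
    (∑ i ∈ s, a i) * log ((∑ i ∈ s, a i) / ∑ i ∈ s, b i) ≤ ∑ i ∈ s, a i * log (a i / b i) := by
  rcases s.eq_empty_or_nonempty with rfl | hs
  · simp
  set A := ∑ i ∈ s, a i
  set B := ∑ i ∈ s, b i
  have hB : 0 < B := Finset.sum_pos hb hs
  have hjensen := convexOn_mul_log.map_sum_le (t := s) (w := fun i => b i / B)
    (p := fun i => a i / b i) (fun i hi => div_nonneg (hb i hi).le hB.le)
    (by rw [← Finset.sum_div, div_self hB.ne'])
    (fun i hi => Set.mem_Ici.2 (div_nonneg (ha i hi) (hb i hi).le))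
  have hmean : ∑ i ∈ s, b i / B * (a i / b i) = A / B := by
    rw [Finset.sum_div]
    exact Finset.sum_congr rfl fun i hi => by field_simp [(hb i hi).ne']
  have hmean_log : ∑ i ∈ s, b i / B * (a i / b i * log (a i / b i)) =
      (∑ i ∈ s, a i * log (a i / b i)) / B := by
    rw [Finset.sum_div]
    exact Finset.sum_congr rfl fun i hi => by field_simp [(hb i hi).ne']
  simp only [smul_eq_mul, hmean, hmean_log] at hjensen
  calc A * log (A / B) = A / B * log (A / B) * B := by field_simp
    _ ≤ _ := (le_div_iff₀ hB).1 hjensen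

theorem two_mul_sq_sub_le_binary_kl {a b : ℝ} (ha₀ : 0 < a) (ha₁ : a < 1) (hb₀ : 0 < b)
    (hb₁ : b < 1) :
    2 * (a - b) ^ 2 ≤ a * log (a / b) + (1 - a) * log ((1 - a) / (1 - b)) := by
  set h : ℝ → ℝ := fun x => a * log x + (1 - a) * log (1 - x) + 2 * (a - x) ^ 2
  have hderiv : ∀ x ∈ Set.Ioo (0 : ℝ) 1,
      HasDerivAt h ((a - x) * (1 - 2 * x) ^ 2 / (x * (1 - x))) x := by
    rintro x ⟨hx₀, hx₁⟩
    have hx₁' : 1 - x ≠ 0 := by linarith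
    have hd := (((hasDerivAt_log hx₀.ne').const_mul a).add
      ((((hasDerivAt_id x).const_sub 1).log hx₁').const_mul (1 - a))).add
      ((((hasDerivAt_id x).const_sub a).pow 2).const_mul 2)
    refine hd.congr_deriv ?_
    simp only [id]
    field_simp
    ring
  have hdiff : DifferentiableOn ℝ h (Set.Ioo 0 1) := fun x hx =>
    (hderiv x hx).differentiableAt.differentiableWithinAt
  -- `h' x` has the sign of `a - x`, so `h` peaks at `a`
  have hmax : IsMaxOn h (Set.Ioo 0 1) a := by
    refine isMaxOn_Ioo_of_deriv (hderiv a ⟨ha₀, ha₁⟩).continuousAt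
      (hdiff.mono (Set.Ioo_subset_Ioo_right ha₁.le))
      (hdiff.mono (Set.Ioo_subset_Ioo_left ha₀.le)) ?_ ?_
    · rintro x ⟨hx₀, hxa⟩
      rw [(hderiv x ⟨hx₀, hxa.trans ha₁⟩).deriv]
      exact div_nonneg (mul_nonneg (by linarith) (sq_nonneg _))
        (mul_nonneg hx₀.le (by linarith))
    · rintro x ⟨hax, hx₁⟩
      rw [(hderiv x ⟨ha₀.trans hax, hx₁⟩).deriv]
      exact div_nonpos_of_nonpos_of_nonneg (mul_nonpos_of_nonpos_of_nonneg (by linarith)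
        (sq_nonneg _)) (mul_nonneg (ha₀.trans hax).le (by linarith))
  have hba : h b ≤ h a := hmax ⟨hb₀, hb₁⟩
  simp only [h, sub_self] at hba
  rw [log_div ha₀.ne' hb₀.ne', log_div (by linarith) (by linarith)]
  nlinarith

theorem sq_D1_div_two_le_KL {β : Type*} [Fintype β] {p q : β → ℝ} (hp : ∀ y, 0 < p y)
    (hq : ∀ y, 0 < q y) (hp₁ : ∑ y, p y = 1) (hq₁ : ∑ y, q y = 1) :
    D1 p q ^ 2 / 2 ≤ KL p q := by
  classical
  set A := Finset.univ.filter fun y => q y ≤ p y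
  set Ac := Finset.univ.filter fun y => ¬ q y ≤ p y
  have split : ∀ f : β → ℝ, ∑ y ∈ A, f y + ∑ y ∈ Ac, f y = ∑ y, f y :=
    Finset.sum_filter_add_sum_filter_not _ _
  set a := ∑ y ∈ A, p y
  set b := ∑ y ∈ A, q y
  have hpAc : ∑ y ∈ Ac, p y = 1 - a := by linarith [split p]
  have hqAc : ∑ y ∈ Ac, q y = 1 - b := by linarith [split q]
  have hD1 : D1 p q = 2 * (a - b) := by
    have hA : ∑ y ∈ A, |p y - q y| = a - b := by
      rw [← Finset.sum_sub_distrib]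
      exact Finset.sum_congr rfl fun y hy =>
        abs_of_nonneg (sub_nonneg.2 (Finset.mem_filter.1 hy).2)
    have hAc : ∑ y ∈ Ac, |p y - q y| = (1 - b) - (1 - a) := by
      rw [← hpAc, ← hqAc, ← Finset.sum_sub_distrib]
      exact Finset.sum_congr rfl fun y hy => by
        rw [abs_of_neg (by linarith [not_le.1 (Finset.mem_filter.1 hy).2]), neg_sub]
    rw [D1, ← split, hA, hAc]
    ring
  have hKL : a * log (a / b) + (1 - a) * log ((1 - a) / (1 - b)) ≤ KL p q := by
    rw [← hpAc, ← hqAc, KL, ← split]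
    exact add_le_add
      (sum_mul_log_div_sum_le_sum_mul_log_div A p q (fun y _ => (hp y).le) fun y _ => hq y)
      (sum_mul_log_div_sum_le_sum_mul_log_div Ac p q (fun y _ => (hp y).le) fun y _ => hq y)
  rcases Ac.eq_empty_or_nonempty with hAc | hAc
  · have ha : a = 1 := by linarith [show ∑ y ∈ Ac, p y = 0 by simp [hAc]]
    have hb : b = 1 := by linarith [show ∑ y ∈ Ac, q y = 0 by simp [hAc]]
    simpa [hD1, ha, hb] using hKL
  · have hpAc_pos : 0 < 1 - a := hpAc ▸ Finset.sum_pos (fun y _ => hp y) hAc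
    have hpq : 1 - a < 1 - b := by
      rw [← hpAc, ← hqAc]
      exact Finset.sum_lt_sum_of_nonempty hAc fun y hy => not_le.1 (Finset.mem_filter.1 hy).2
    have hb₀ : 0 < b := by
      have hA : A.Nonempty := by
        by_contra hA
        simp only [Finset.not_nonempty_iff_eq_empty] at hA
        simp [a, b, hA] at hpq
      exact Finset.sum_pos (fun y _ => hq y) hA
    rw [hD1]
    nlinarith [two_mul_sq_sub_le_binary_kl (a := a) (b := b) (by linarith) (by linarith) hb₀
      (by linarith)]

theorem margX_pos {α β : Type*} [Fintype β] {P : α → β → ℝ} {x : α} (hP : ∀ y, 0 < P x y)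
    (y : β) : 0 < margX P x :=
  Finset.sum_pos (fun y _ => hP y) ⟨y, Finset.mem_univ y⟩

theorem condYX_pos {α β : Type*} [Fintype β] {P : α → β → ℝ} {x : α} (hP : ∀ y, 0 < P x y)
    (y : β) : 0 < condYX P y x :=
  div_pos (hP y) (margX_pos hP y)

theorem margY_pos {α β : Type*} [Fintype α] {P : α → β → ℝ} {y : β} (hP : ∀ x, 0 < P x y)
    (x : α) : 0 < margY P y :=
  Finset.sum_pos (fun x _ => hP x) ⟨x, Finset.mem_univ x⟩

theorem sum_condYX_eq_one {α β : Type*} [Fintype β] {P : α → β → ℝ} {x : α}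
    (hx : margX P x ≠ 0) : ∑ y, condYX P y x = 1 := by
  simp only [condYX]
  rw [← Finset.sum_div]
  exact div_self hx

theorem MI_eq_sum_mul_log_condYX_div_margY {α β : Type*} [Fintype α] [Fintype β]
    (P : α → β → ℝ) : MI P = ∑ x, ∑ y, P x y * log (condYX P y x / margY P y) := by
  simp only [MI, condYX, div_mul_eq_div_div]

theorem D1_mix_right {β : Type*} [Fintype β] (p r : β → ℝ) {c : ℝ} (hc : 0 ≤ c) :
    D1 p (fun y => (1 - c) * p y + c * r y) = c * D1 p r := by
  simp only [D1, Finset.mul_sum]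
  refine Finset.sum_congr rfl fun y _ => ?_
  rw [show p y - ((1 - c) * p y + c * r y) = c * (p y - r y) by ring, abs_mul, abs_of_nonneg hc]

section Clustering

variable {α β τ : Type*} [Fintype α] [DecidableEq τ] {P : α → β → ℝ} {T : α → τ}

theorem sum_jointT_mul [Fintype τ] [Fintype β] (f : τ → β → ℝ) :
    ∑ t, ∑ y, jointT P T t y * f t y = ∑ x, ∑ y, P x y * f (T x) y := by
  calc ∑ t, ∑ y, jointT P T t y * f t y
      = ∑ t, ∑ x ∈ Finset.univ.filter (fun x => T x = t), ∑ y, P x y * f (T x) y := by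
        refine Finset.sum_congr rfl fun t _ => ?_
        simp only [jointT, Finset.sum_mul]
        rw [Finset.sum_comm]
        exact Finset.sum_congr rfl fun x hx => by rw [(Finset.mem_filter.1 hx).2]
    _ = _ := Finset.sum_fiberwise _ _ _

theorem margY_jointT [Fintype τ] (y : β) : margY (jointT P T) y = margY P y :=
  Finset.sum_fiberwise _ _ _

theorem condYX_jointT [Fintype β] (t : τ) (y : β) : condYX (jointT P T) y t = condYT P T t y := by
  simp only [condYX, condYT, margX, jointT]
  rw [Finset.sum_comm]

theorem jointT_pos (hP : ∀ x y, 0 < P x y) (x : α) (y : β) : 0 < jointT P T (T x) y :=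
  Finset.sum_pos (fun x' _ => hP x' y) ⟨x, Finset.mem_filter.2 ⟨Finset.mem_univ x, rfl⟩⟩

theorem condYT_pos [Fintype β] (hP : ∀ x y, 0 < P x y) (x : α) (y : β) : 0 < condYT P T (T x) y :=
  condYX_jointT (P := P) (T x) y ▸ condYX_pos (jointT_pos hP x) y

theorem sum_condYT_eq_one [Fintype β] (hP : ∀ x y, 0 < P x y) (x : α) (y₀ : β) :
    ∑ y, condYT P T (T x) y = 1 := by
  rw [Finset.sum_congr rfl fun y _ => (condYX_jointT (T x) y).symm]
  exact sum_condYX_eq_one (margX_pos (jointT_pos hP x) y₀).ne'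

theorem MI_jointT [Fintype τ] [Fintype β] :
    MI (jointT P T) = ∑ x, ∑ y, P x y * log (condYT P T (T x) y / margY P y) := by
  rw [MI_eq_sum_mul_log_condYX_div_margY, sum_jointT_mul]
  simp only [condYX_jointT, margY_jointT]

theorem MI_sub_MI_jointT [Fintype τ] [Fintype β] (hP : ∀ x y, 0 < P x y) :
    MI P - MI (jointT P T) =
      ∑ x, margX P x * KL (fun y => condYX P y x) (condYT P T (T x)) := by
  rw [MI_eq_sum_mul_log_condYX_div_margY, MI_jointT, ← Finset.sum_sub_distrib]
  refine Finset.sum_congr rfl fun x _ => ?_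
  rw [← Finset.sum_sub_distrib, KL, Finset.mul_sum]
  refine Finset.sum_congr rfl fun y _ => ?_
  have hmY := margY_pos (hP · y) x
  rw [← mul_sub, ← log_div (div_pos (condYX_pos (hP x) y) hmY).ne'
    (div_pos (condYT_pos hP x y) hmY).ne', div_div_div_cancel_right₀ hmY.ne', condYX]
  field_simp [(margX_pos (hP x) y).ne']

variable [DecidableEq α]

theorem betaX_nonneg [Fintype β] (hP : ∀ x y, 0 ≤ P x y) (x : α) : 0 ≤ betaX P T x :=
  div_nonneg (Finset.sum_nonneg fun x' _ => Finset.sum_nonneg fun y _ => hP x' y)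
    (Finset.sum_nonneg fun x' _ => Finset.sum_nonneg fun y _ => hP x' y)

theorem condYT_eq_mix [Fintype β] (hP : ∀ x y, 0 < P x y) (x : α) (y : β) :
    condYT P T (T x) y = (1 - betaX P T x) * condYX P y x + betaX P T x * Pother P T x y := by
  set C := Finset.univ.filter fun x' => T x' = T x
  have hx : x ∈ C := Finset.mem_filter.2 ⟨Finset.mem_univ x, rfl⟩
  set R := ∑ x' ∈ C \ {x}, margX P x'
  set S := ∑ x' ∈ C \ {x}, P x' y
  have hm : 0 < margX P x := margX_pos (hP x) y
  have hR : 0 ≤ R := Finset.sum_nonneg fun x' _ => (margX_pos (hP x') y).le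
  -- if `R = 0` the rest of the cluster is empty, so `S = 0` as well
  have hRS : R / (R + margX P x) * (S / R) = S / (R + margX P x) := by
    rcases (C \ {x}).eq_empty_or_nonempty with hC | hC
    · simp [R, S, hC]
    · have : 0 < R := Finset.sum_pos (fun x' _ => margX_pos (hP x') y) hC
      field_simp
  have hJ : jointT P T (T x) y = S + P x y := Finset.sum_eq_sum_sdiff_singleton_add hx _
  have hM : ∑ x' ∈ C, margX P x' = R + margX P x := Finset.sum_eq_sum_sdiff_singleton_add hx _
  rw [condYT, betaX, Pother, condYX, hJ, hM, hRS]
  field_simp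
  ring

theorem margX_mul_betaX_sq_mul_D1_sq_le [Fintype β] (hP : ∀ x y, 0 < P x y) (x : α) :
    margX P x * betaX P T x ^ 2 / 2 * D1 (fun y => condYX P y x) (Pother P T x) ^ 2 ≤
      margX P x * KL (fun y => condYX P y x) (condYT P T (T x)) := by
  rcases isEmpty_or_nonempty β with hβ | ⟨⟨y⟩⟩
  · simp [margX]
  have hm : 0 < margX P x := margX_pos (hP x) y
  have hD1 : D1 (fun y => condYX P y x) (condYT P T (T x)) =
      betaX P T x * D1 (fun y => condYX P y x) (Pother P T x) := by
    rw [← D1_mix_right _ _ (betaX_nonneg (fun x y => (hP x y).le) x)]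
    exact congrArg _ (funext (condYT_eq_mix hP x))
  have hpinsker := sq_D1_div_two_le_KL (condYX_pos (hP x)) (condYT_pos (T := T) hP x)
    (sum_condYX_eq_one hm.ne') (sum_condYT_eq_one hP x y)
  calc _ = margX P x * (D1 (fun y => condYX P y x) (condYT P T (T x)) ^ 2 / 2) := by
        rw [hD1]
        ring
    _ ≤ _ := mul_le_mul_of_nonneg_left hpinsker hm.le

end Clustering

theorem IB_pairwise_L1_bound_general {α β τ : Type*} [Fintype α] [Fintype β] [Fintype τ]
    [DecidableEq α] [DecidableEq τ]
    (P : α → β → ℝ) (hP : ∀ x y, 0 < P x y)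
    (T : α → τ) (ε : ℝ) (hloss : MI P - MI (jointT P T) ≤ ε) :
    ∑ x, margX P x * betaX P T x ^ 2 / 2 *
        D1 (fun y => condYX P y x) (Pother P T x) ^ 2 ≤ ε :=
  calc _ ≤ ∑ x, margX P x * KL (fun y => condYX P y x) (condYT P T (T x)) :=
        Finset.sum_le_sum fun x _ => margX_mul_betaX_sq_mul_D1_sq_le hP x
    _ = MI P - MI (jointT P T) := (MI_sub_MI_jointT hP).symm
    _ ≤ ε := hloss

/-- Theorem: if the information loss is at most ε, then the weighted squared L1
distances of each member's translation distribution to the mixture of the rest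
of its cluster sum to at most ε. -/
theorem IB_pairwise_L1_bound {α β τ : Type*} [Fintype α] [Fintype β] [Fintype τ]
    [DecidableEq α] [DecidableEq τ]
    (P : α → β → ℝ) (hP : ∀ x y, 0 < P x y) (hsum : ∑ x, ∑ y, P x y = 1)
    (T : α → τ) (ε : ℝ) (hloss : MI P - MI (jointT P T) ≤ ε) :
    ∑ x, margX P x * betaX P T x ^ 2 / 2 *
        D1 (fun y => condYX P y x) (Pother P T x) ^ 2 ≤ ε :=
  IB_pairwise_L1_bound_general P hP T ε hloss
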